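/- arXiv:2112.04237 — 2 statements merged into one kernel-verified Lean document; each statement's English description precedes it below -/
import Mathlib

section
/- Let R = S/(x_1^{a_1+1},...,x_n^{a_n+1}) with 1 ≤ a_1 ≤ ... ≤ a_n, n its graded maximal ideal, and let 1 ≤ k ≤ a_1. Let I_k be the poset ideal of the divisor poset P of R/(0:n^k) generated by the monomials x_1^{b_1}···x_n^{b_n} with 0 ≤ b_i ≤ a_i and ∑ b_i = k. Then I_k is a symmetric poset ideal of P. -/
/-- Monomials are identified with their exponent vectors in `Fin n → ℕ`
(multiplication of monomials = addition of exponent vectors).  A divisor poset (the set of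
monomials outside a 0-dimensional monomial ideal, ordered by reverse divisibility) is a
finite set of exponent vectors closed under taking divisors. -/
def IsDivisorPoset {n : ℕ} (P : Set (Fin n → ℕ)) : Prop :=
  P.Finite ∧ ∀ u ∈ P, ∀ v : Fin n → ℕ, v ≤ u → v ∈ P

/-- A poset ideal of the divisor poset `P` (downward closed for the order
`u ⪯ v ↔ v ∣ u`, i.e. upward closed for the pointwise order on exponents). -/
def IsPosetIdealOf {n : ℕ} (P I : Set (Fin n → ℕ)) : Prop :=
  I ⊆ P ∧ ∀ u ∈ I, ∀ v ∈ P, u ≤ v → v ∈ I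

/-- `J` is a companion of `I`: there is a multigraded isomorphism `J* → I`, i.e. a bijection
`f : J → I` such that the monomial `f v · v` (the sum of exponent vectors) is a constant
monomial `m`. -/
def AreCompanions {n : ℕ} (I J : Set (Fin n → ℕ)) : Prop :=
  ∃ (m : Fin n → ℕ) (f : (Fin n → ℕ) → (Fin n → ℕ)),
    Set.BijOn f J I ∧ ∀ v ∈ J, f v + v = m

/-- `I` is symmetric if `I` is a companion of itself. -/
def IsSymmetricIdeal {n : ℕ} (I : Set (Fin n → ℕ)) : Prop := AreCompanions I I

/-- `Gen(I)`: the maximal elements of `I` in the order `⪯` (reverse divisibility), i.e. the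
minimal exponent vectors: the minimal monomial generators. -/
def genSet {n : ℕ} (I : Set (Fin n → ℕ)) : Set (Fin n → ℕ) :=
  {u ∈ I | ∀ v ∈ I, v ≤ u → v = u}

/-- `Soc(I)`: the minimal elements of `I` in the order `⪯`, i.e. the maximal exponent
vectors: the socle monomials. -/
def socSet {n : ℕ} (I : Set (Fin n → ℕ)) : Set (Fin n → ℕ) :=
  {u ∈ I | ∀ v ∈ I, u ≤ v → v = u}

/-- The divisor poset of `R/(0 : n^k)` where `R = S/(x_1^{a_1+1},…,x_n^{a_n+1})`:
monomials `x^c` with `c ≤ a` that do not annihilate `n^k`, i.e. such that some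
degree-`k` multiple of `x^c` survives in `R`. -/
def ciQuotPoset (n : ℕ) (a : Fin n → ℕ) (k : ℕ) : Set (Fin n → ℕ) :=
  {c | c ≤ a ∧ ∃ d : Fin n → ℕ, (∑ i, d i) = k ∧ c + d ≤ a}

/-- The poset ideal `I_k`: generated by the monomials `x^g` with `g ≤ a` of total
degree `k`. -/
def ciQuotIdeal (n : ℕ) (a : Fin n → ℕ) (k : ℕ) : Set (Fin n → ℕ) :=
  {c ∈ ciQuotPoset n a k | ∃ g : Fin n → ℕ, g ≤ a ∧ (∑ i, g i) = k ∧ g ≤ c}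

/-! The complement `c ↦ a - c` in the box `0 ≤ c ≤ a` is an involution pairing each monomial
with one whose product with it is `x^a`. It preserves `I_k`: the witness `d` showing that `x^c`
survives in `R/(0 : n^k)` becomes a degree-`k` generator below `a - c`, and the degree-`k`
generator `g` below `c` becomes the witness for `a - c`. -/

theorem isSymmetricIdeal_of_tsub_mem {n : ℕ} {I : Set (Fin n → ℕ)} (a : Fin n → ℕ)
    (hle : ∀ c ∈ I, c ≤ a) (hmem : ∀ c ∈ I, a - c ∈ I) : IsSymmetricIdeal I := by
  have hinv : Set.InvOn (a - ·) (a - ·) I I := by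
    constructor <;> exact fun c hc => tsub_tsub_cancel_of_le (hle c hc)
  exact ⟨a, (a - ·), hinv.bijOn hmem hmem, fun c hc => tsub_add_cancel_of_le (hle c hc)⟩

theorem tsub_mem_ciQuotIdeal {n : ℕ} {a c : Fin n → ℕ} {k : ℕ} (hc : c ∈ ciQuotIdeal n a k) :
    a - c ∈ ciQuotIdeal n a k := by
  obtain ⟨⟨hca, d, hd, hcd⟩, g, -, hg, hgc⟩ := hc
  have hsub : a - c + g ≤ a :=
    calc a - c + g ≤ a - c + c := add_le_add_right hgc _
      _ = a := tsub_add_cancel_of_le hca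
  exact ⟨⟨tsub_le_self, g, hg, hsub⟩, d, hcd.trans' le_add_self, hd, le_tsub_of_add_le_left hcd⟩

theorem stmt12_general (n : ℕ) (a : Fin n → ℕ) (k : ℕ) :
    IsSymmetricIdeal (ciQuotIdeal n a k) :=
  isSymmetricIdeal_of_tsub_mem a (fun _ hc => hc.1.1) fun _ => tsub_mem_ciQuotIdeal

/-- For `R = S/(x_1^{a_1+1},…,x_n^{a_n+1})` with `1 ≤ a_1 ≤ ⋯ ≤ a_n` and `1 ≤ k ≤ a_1`,
the poset ideal `I_k` of the divisor poset of `R/(0 : n^k)` generated by the monomials of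
total degree `k` is symmetric. -/
theorem stmt12 (n : ℕ) (a : Fin n → ℕ) (k : ℕ)
    (ha : ∀ i, 1 ≤ a i) (hmono : ∀ i j : Fin n, i ≤ j → a i ≤ a j)
    (hk : 1 ≤ k) (hka : ∀ i, k ≤ a i) :
    IsSymmetricIdeal (ciQuotIdeal n a k) :=
  stmt12_general n a k
end

section
/- Let Δ be a flag simplicial complex on [n] and P_Δ the divisor poset of K{Δ} = S/(I_Δ, x_1^2,...,x_n^2). Then the trace tr(P_Δ*) (the union of all τ-ideals of P_Δ) is the poset ideal generated by the monomials u_F for which F is a free face of Δ. -/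
/-- A simplicial complex on the vertex set `Fin n`: downward closed and containing all
vertices. -/
def IsComplexOn (n : ℕ) (Δ : Set (Finset (Fin n))) : Prop :=
  (∀ F ∈ Δ, ∀ G : Finset (Fin n), G ⊆ F → G ∈ Δ) ∧ ∀ i : Fin n, {i} ∈ Δ

/-- `Δ` is flag: every minimal non-face has cardinality `2`. -/
def IsFlag (n : ℕ) (Δ : Set (Finset (Fin n))) : Prop :=
  ∀ F : Finset (Fin n), F ∉ Δ →
    ∃ i j : Fin n, i ≠ j ∧ ({i, j} : Finset (Fin n)) ⊆ F ∧ ({i, j} : Finset (Fin n)) ∉ Δ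

/-- A facet: a maximal face of `Δ`. -/
def IsFacet (n : ℕ) (Δ : Set (Finset (Fin n))) (F : Finset (Fin n)) : Prop :=
  F ∈ Δ ∧ ∀ G ∈ Δ, F ⊆ G → G = F

/-- A free face: a face contained in a unique facet. -/
def IsFreeFace (n : ℕ) (Δ : Set (Finset (Fin n))) (F : Finset (Fin n)) : Prop :=
  F ∈ Δ ∧ ∃! G : Finset (Fin n), IsFacet n Δ G ∧ F ⊆ G

/-- The squarefree monomial `u_F = ∏_{i ∈ F} x_i` as an exponent vector. -/
def indic {n : ℕ} (F : Finset (Fin n)) : Fin n → ℕ := fun i => if i ∈ F then 1 else 0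

/-- The divisor poset `P_Δ` of `K{Δ} = S/(I_Δ, x_1^2,…,x_n^2)`: the exponent vectors of
the monomials `u_F`, `F ∈ Δ`. -/
def complexPoset (n : ℕ) (Δ : Set (Finset (Fin n))) : Set (Fin n → ℕ) :=
  {v | ∃ F ∈ Δ, v = indic F}

/-- A τ-ideal of `P_Δ`: a poset ideal admitting a companion poset ideal. -/
def IsTauIdealOf (n : ℕ) (Δ : Set (Finset (Fin n))) (I : Set (Fin n → ℕ)) : Prop :=
  IsPosetIdealOf (complexPoset n Δ) I ∧
    ∃ J, IsPosetIdealOf (complexPoset n Δ) J ∧ AreCompanions I J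

/-- The trace `tr(P_Δ*)`: the union of all τ-ideals of `P_Δ`. -/
def traceSet (n : ℕ) (Δ : Set (Finset (Fin n))) : Set (Fin n → ℕ) :=
  {v | ∃ I, IsTauIdealOf n Δ I ∧ v ∈ I}


/-!
If `F` is a free face with unique facet `G`, every face `H ⊇ F` lies in `G`, so
`H ↦ F ∪ (G \ H)`, i.e. `u_H ↦ u_F u_G / u_H`, is an involution of the ideal generated by
`u_F`: that ideal is symmetric. Conversely, if `u_H` lies in a τ-ideal `I` with companion `J`
and constant product `m`, write `m = u_H u_{G₀}`; for every face `G ⊇ H` the monomial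
`m / u_G` is squarefree, which forces `G \ H ⊆ G₀`. Two different facets through `H` would,
by flagness, contain vertices `k ∈ G₁ \ G₂`, `l ∈ G₂ \ G₁` with `{k, l} ∉ Δ`, although both
lie in the face `G₀`.
-/

open Finset

section

variable {n : ℕ} {Δ : Set (Finset (Fin n))}

lemma indic_le_indic {F G : Finset (Fin n)} : indic F ≤ indic G ↔ F ⊆ G := by
  refine ⟨fun h i hi => ?_, fun h i => ?_⟩
  · by_contra hiG
    simpa [indic, hi, hiG] using h i
  · by_cases hi : i ∈ F
    · simp [indic, hi, h hi]
    · simp [indic, hi]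

lemma indic_add_indic_tsub_indic {F G H : Finset (Fin n)} (hFH : F ⊆ H) (hHG : H ⊆ G) :
    indic F + indic G - indic H = indic (F ∪ (G \ H)) := by
  funext i
  have := @hFH i
  have := @hHG i
  simp only [indic, Pi.add_apply, Pi.sub_apply, mem_union, mem_sdiff]
  split_ifs <;> simp_all

lemma AreCompanions.exists_forall_exists_add_eq {I J : Set (Fin n → ℕ)}
    (h : AreCompanions I J) : ∃ m, ∀ u ∈ I, ∃ v ∈ J, u + v = m := by
  obtain ⟨m, f, hf, hsum⟩ := h
  refine ⟨m, fun u hu => ?_⟩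
  obtain ⟨v, hv, rfl⟩ := hf.surjOn hu
  exact ⟨v, hv, hsum v hv⟩

lemma isSymmetricIdeal_of_mapsTo_tsub {I : Set (Fin n → ℕ)} {m : Fin n → ℕ}
    (hle : ∀ u ∈ I, u ≤ m) (hmaps : Set.MapsTo (m - ·) I I) : IsSymmetricIdeal I :=
  have hinv : Set.LeftInvOn (m - ·) (m - ·) I := fun u hu => tsub_tsub_cancel_of_le (hle u hu)
  ⟨m, (m - ·), Set.InvOn.bijOn ⟨hinv, hinv⟩ hmaps hmaps,
    fun u hu => tsub_add_cancel_of_le (hle u hu)⟩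

lemma exists_facet_superset {H : Finset (Fin n)} (hH : H ∈ Δ) :
    ∃ G, IsFacet n Δ G ∧ H ⊆ G := by
  obtain ⟨G, ⟨hG, hHG⟩, hmax⟩ := Set.Finite.exists_maximalFor Finset.card
    {G | G ∈ Δ ∧ H ⊆ G} (Set.toFinite _) ⟨H, hH, subset_rfl⟩
  refine ⟨G, ⟨hG, fun G' hG' hGG' => ?_⟩, hHG⟩
  exact (eq_of_subset_of_card_le hGG' (hmax ⟨hG', hHG.trans hGG'⟩ (card_le_card hGG'))).symm

lemma isFreeFace_of_forall_facet {H : Finset (Fin n)} (hH : H ∈ Δ)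
    (h : ∀ G₁ G₂, IsFacet n Δ G₁ → IsFacet n Δ G₂ → H ⊆ G₁ → H ⊆ G₂ → G₁ ⊆ G₂) :
    IsFreeFace n Δ H := by
  obtain ⟨G, hG, hHG⟩ := exists_facet_superset hH
  exact ⟨hH, G, ⟨hG, hHG⟩, fun G' ⟨hG', hHG'⟩ =>
    (h G' G hG' hG hHG' hHG).antisymm (h G G' hG hG' hHG hHG')⟩

lemma IsFreeFace.subset_facet {F G H : Finset (Fin n)} (hF : IsFreeFace n Δ F)
    (hG : IsFacet n Δ G) (hFG : F ⊆ G) (hH : H ∈ Δ) (hFH : F ⊆ H) : H ⊆ G := by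
  obtain ⟨G', hG', hHG'⟩ := exists_facet_superset hH
  rwa [hF.2.unique ⟨hG', hFH.trans hHG'⟩ ⟨hG, hFG⟩] at hHG'

lemma IsFlag.exists_nonedge_of_notMem_facet (hflag : IsFlag n Δ) (hdown : IsLowerSet Δ)
    {G : Finset (Fin n)} (hG : IsFacet n Δ G) {k : Fin n} (hk : k ∉ G) :
    ∃ l ∈ G, ({k, l} : Finset (Fin n)) ∉ Δ := by
  have hins : insert k G ∉ Δ := fun h =>
    hk (hG.2 _ h (subset_insert k G) ▸ mem_insert_self k G)
  obtain ⟨i, j, hij, hsub, hnot⟩ := hflag _ hins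
  rw [insert_subset_iff, singleton_subset_iff, mem_insert, mem_insert] at hsub
  obtain ⟨rfl | hi, rfl | hj⟩ := hsub
  · exact absurd rfl hij
  · exact ⟨j, hj, hnot⟩
  · exact ⟨i, hi, by rwa [pair_comm]⟩
  · exact absurd (hdown (insert_subset hi (singleton_subset_iff.2 hj)) hG.1) hnot

lemma IsFlag.exists_nonedge_of_not_subset (hflag : IsFlag n Δ) (hdown : IsLowerSet Δ)
    {G₁ G₂ : Finset (Fin n)} (hG₁ : IsFacet n Δ G₁) (hG₂ : IsFacet n Δ G₂) (h : ¬G₁ ⊆ G₂) :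
    ∃ k ∈ G₁ \ G₂, ∃ l ∈ G₂ \ G₁, ({k, l} : Finset (Fin n)) ∉ Δ := by
  obtain ⟨k, hk₁, hk₂⟩ := not_subset.1 h
  obtain ⟨l, hl₂, hkl⟩ := hflag.exists_nonedge_of_notMem_facet hdown hG₂ hk₂
  have hl₁ : l ∉ G₁ := fun hl₁ =>
    hkl (hdown (insert_subset hk₁ (singleton_subset_iff.2 hl₁)) hG₁.1)
  exact ⟨k, mem_sdiff.2 ⟨hk₁, hk₂⟩, l, mem_sdiff.2 ⟨hl₂, hl₁⟩, hkl⟩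

lemma exists_face_sdiff_subset_of_indic_mem_tauIdeal {I : Set (Fin n → ℕ)}
    (hI : IsTauIdealOf n Δ I) {H : Finset (Fin n)} (hH : H ∈ Δ) (hHI : indic H ∈ I) :
    ∃ G₀ ∈ Δ, ∀ G ∈ Δ, H ⊆ G → G \ H ⊆ G₀ := by
  obtain ⟨⟨-, hIup⟩, J, ⟨hJP, -⟩, hIJ⟩ := hI
  obtain ⟨m, partner⟩ := hIJ.exists_forall_exists_add_eq
  have partnerFace : ∀ G ∈ Δ, H ⊆ G → ∃ D ∈ Δ, indic G + indic D = m := by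
    intro G hG hHG
    obtain ⟨v, hv, hsum⟩ := partner _ (hIup _ hHI _ ⟨G, hG, rfl⟩ (indic_le_indic.2 hHG))
    obtain ⟨D, hD, rfl⟩ := hJP hv
    exact ⟨D, hD, hsum⟩
  obtain ⟨G₀, hG₀, hm₀⟩ := partnerFace H hH subset_rfl
  refine ⟨G₀, hG₀, fun G hG hHG k hk => ?_⟩
  obtain ⟨D, -, hmD⟩ := partnerFace G hG hHG
  rw [mem_sdiff] at hk
  have hmk := congrFun (hm₀.trans hmD.symm) k
  by_contra hk₀
  simp only [indic, Pi.add_apply, if_pos hk.1, if_neg hk.2, if_neg hk₀] at hmk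
  omega

lemma isFreeFace_of_indic_mem_tauIdeal (hflag : IsFlag n Δ) (hdown : IsLowerSet Δ)
    {I : Set (Fin n → ℕ)} (hI : IsTauIdealOf n Δ I) {H : Finset (Fin n)} (hH : H ∈ Δ)
    (hHI : indic H ∈ I) : IsFreeFace n Δ H := by
  obtain ⟨G₀, hG₀, hsub⟩ := exists_face_sdiff_subset_of_indic_mem_tauIdeal hI hH hHI
  refine isFreeFace_of_forall_facet hH fun G₁ G₂ hG₁ hG₂ hHG₁ hHG₂ => ?_
  by_contra hne
  obtain ⟨k, hk, l, hl, hkl⟩ := hflag.exists_nonedge_of_not_subset hdown hG₁ hG₂ hne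
  have hk₀ := hsub G₁ hG₁.1 hHG₁ (sdiff_subset_sdiff subset_rfl hHG₂ hk)
  have hl₀ := hsub G₂ hG₂.1 hHG₂ (sdiff_subset_sdiff subset_rfl hHG₁ hl)
  exact hkl (hdown (insert_subset hk₀ (singleton_subset_iff.2 hl₀)) hG₀)

def starIdeal (Δ : Set (Finset (Fin n))) (F : Finset (Fin n)) : Set (Fin n → ℕ) :=
  {v | ∃ H ∈ Δ, F ⊆ H ∧ v = indic H}

lemma isPosetIdealOf_starIdeal (F : Finset (Fin n)) :
    IsPosetIdealOf (complexPoset n Δ) (starIdeal Δ F) := by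
  refine ⟨fun v ⟨H, hH, _, hv⟩ => ⟨H, hH, hv⟩, ?_⟩
  rintro _ ⟨H, -, hFH, rfl⟩ _ ⟨H', hH', rfl⟩ hle
  exact ⟨H', hH', hFH.trans (indic_le_indic.1 hle), rfl⟩

lemma IsFreeFace.isSymmetricIdeal_starIdeal (hdown : IsLowerSet Δ) {F : Finset (Fin n)}
    (hF : IsFreeFace n Δ F) : IsSymmetricIdeal (starIdeal Δ F) := by
  obtain ⟨G, ⟨hG, hFG⟩, -⟩ := hF.2
  have hHG : ∀ H ∈ Δ, F ⊆ H → H ⊆ G := fun H hH hFH => hF.subset_facet hG hFG hH hFH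
  refine isSymmetricIdeal_of_mapsTo_tsub (m := indic F + indic G) ?_ ?_
  · rintro _ ⟨H, hH, hFH, rfl⟩
    exact (indic_le_indic.2 (hHG H hH hFH)).trans le_add_self
  · rintro _ ⟨H, hH, hFH, rfl⟩
    exact ⟨F ∪ (G \ H), hdown (union_subset hFG sdiff_subset) hG.1, subset_union_left,
      indic_add_indic_tsub_indic hFH (hHG H hH hFH)⟩

end

/-- For a flag simplicial complex `Δ`, the trace `tr(P_Δ*)` is the poset ideal of `P_Δ`
generated by the monomials `u_F` with `F` a free face of `Δ`. -/
theorem stmt15 (n : ℕ) (Δ : Set (Finset (Fin n))) (hΔ : IsComplexOn n Δ)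
    (hflag : IsFlag n Δ) :
    traceSet n Δ =
      {v | ∃ F H : Finset (Fin n), IsFreeFace n Δ F ∧ H ∈ Δ ∧ F ⊆ H ∧ v = indic H} := by
  have hdown : IsLowerSet Δ := fun F G hGF hF => hΔ.1 F hF G hGF
  ext v
  constructor
  · rintro ⟨I, hI, hvI⟩
    obtain ⟨H, hH, rfl⟩ := hI.1.1 hvI
    exact ⟨H, H, isFreeFace_of_indic_mem_tauIdeal hflag hdown hI hH hvI, hH, subset_rfl, rfl⟩
  · rintro ⟨F, H, hF, hH, hFH, rfl⟩
    exact ⟨starIdeal Δ F, ⟨isPosetIdealOf_starIdeal F, _, isPosetIdealOf_starIdeal F,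
      hF.isSymmetricIdeal_starIdeal hdown⟩, H, hH, hFH, rfl⟩
end
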